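/- Let L(z) = Σ_{j≥1} d_j (f̂(j)−1) z^j / j with 0 < d_j ≤ d⁺ and |f̂(j)| ≤ 1, and let ρ(p) = (Σ_{j≥1} |f̂(j)−1|^p / j)^{1/p} for fixed p > 1. Then for all n, m ≥ 1: |L(e^{-1/n}) − L(e^{-1/m})| ≤ d⁺ ρ(p)(1 + |log(n/m)|), and |L(e^{-1/n})| ≤ d⁺ ρ(p)(1 + log n). -/

import Mathlib

/-!
For `0 ≤ y ≤ x < 1`, `L x - L y = ∑ a_j c_j` with weights `c_j = (x^j - y^j) / j ≥ 0`. These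
weights satisfy `c_j ≤ 1 / j`, and by the logarithm series their total mass is
`log (1 - y) - log (1 - x)`. Hölder's inequality for the measure `∑ c_j δ_j` therefore bounds
`|L x - L y|` by `d⁺ ρ(p) (log (1 - y) - log (1 - x))^{1/q}`. For `x = e^{-1/n}`, `y = e^{-1/m}`
the elementary bounds `t / e ≤ 1 - e^{-t} ≤ t` on `(0, 1]` give mass at most `1 + log (n / m)`,
and `y = 0` gives the second estimate.
-/

open Real

theorem summable_and_inner_le_weight_mul_Lp_tsum_of_nonneg {ι : Type*} {p q : ℝ} {c f : ι → ℝ}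
    (hpq : p.HolderConjugate q) (hc : ∀ i, 0 ≤ c i) (hf : ∀ i, 0 ≤ f i) (hc_sum : Summable c)
    (hf_sum : Summable fun i => c i * f i ^ p) :
    (Summable fun i => c i * f i) ∧
      ∑' i, c i * f i ≤ (∑' i, c i * f i ^ p) ^ (1 / p) * (∑' i, c i) ^ (1 / q) := by
  have hF : ∀ i, (c i ^ (1 / p) * f i) ^ p = c i * f i ^ p := fun i => by
    rw [mul_rpow (rpow_nonneg (hc i) _) (hf i), ← rpow_mul (hc i),
      one_div_mul_cancel hpq.ne_zero, rpow_one]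
  have hG : ∀ i, (c i ^ (1 / q)) ^ q = c i := fun i => by
    rw [← rpow_mul (hc i), one_div_mul_cancel hpq.symm.ne_zero, rpow_one]
  have hFG : ∀ i, c i ^ (1 / p) * f i * c i ^ (1 / q) = c i * f i := fun i => by
    have h1 : 1 / p + 1 / q = 1 := by simpa using hpq.one_div_add_one_div
    rw [mul_right_comm, ← rpow_add' (hc i) (by rw [h1]; exact one_ne_zero), h1, rpow_one]
  have := summable_and_inner_le_Lp_mul_Lq_tsum_of_nonneg hpq
    (f := fun i => c i ^ (1 / p) * f i) (g := fun i => c i ^ (1 / q))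
    (fun i => mul_nonneg (rpow_nonneg (hc i) _) (hf i)) (fun i => rpow_nonneg (hc i) _)
    (by simpa only [hF] using hf_sum) (by simpa only [hG] using hc_sum)
  simpa only [hF, hG, hFG] using this

theorem hasSum_pow_succ_sub_pow_succ_div {x y : ℝ} (hx : |x| < 1) (hy : |y| < 1) :
    HasSum (fun j : ℕ => (x ^ (j + 1) - y ^ (j + 1)) / (j + 1)) (log (1 - y) - log (1 - x)) := by
  rw [show log (1 - y) - log (1 - x) = -log (1 - x) - -log (1 - y) by ring]
  simpa only [sub_div] using
    (hasSum_pow_div_log_of_abs_lt_one hx).sub (hasSum_pow_div_log_of_abs_lt_one hy)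

theorem log_one_sub_exp_neg_le_log {t : ℝ} (ht : 0 < t) : log (1 - exp (-t)) ≤ log t := by
  refine log_le_log (sub_pos.2 (exp_lt_one_iff.2 (neg_lt_zero.2 ht))) ?_
  linarith [add_one_le_exp (-t)]

theorem log_sub_one_le_log_one_sub_exp_neg {t : ℝ} (ht0 : 0 < t) (ht1 : t ≤ 1) :
    log t - 1 ≤ log (1 - exp (-t)) := by
  have hconc : t * exp (-1) ≤ 1 - exp (-t) := by
    have h1 : (t + 1) * exp (-t) ≤ 1 := by
      calc (t + 1) * exp (-t) ≤ exp t * exp (-t) := by gcongr; exact add_one_le_exp t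
        _ = 1 := by rw [← exp_add, add_neg_cancel, exp_zero]
    have h2 : exp (-1) ≤ exp (-t) := exp_le_exp.2 (by linarith)
    nlinarith
  calc log t - 1 = log (t * exp (-1)) := by rw [log_mul ht0.ne' (exp_ne_zero _), log_exp]; ring
    _ ≤ log (1 - exp (-t)) := log_le_log (by positivity) hconc

theorem summable_and_tsum_mul_pow_succ_sub_pow_succ_div_le {p q : ℝ} {g : ℕ → ℝ} {x y : ℝ}
    (hpq : p.HolderConjugate q) (hg : ∀ j, 0 ≤ g j)
    (hg_sum : Summable fun j : ℕ => g j ^ p / (j + 1))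
    (hy : 0 ≤ y) (hyx : y ≤ x) (hx : x < 1) :
    (Summable fun j : ℕ => (x ^ (j + 1) - y ^ (j + 1)) / (j + 1) * g j) ∧
      ∑' j : ℕ, (x ^ (j + 1) - y ^ (j + 1)) / (j + 1) * g j ≤
        (∑' j : ℕ, g j ^ p / (j + 1)) ^ (1 / p) * (log (1 - y) - log (1 - x)) ^ (1 / q) := by
  set c : ℕ → ℝ := fun j => (x ^ (j + 1) - y ^ (j + 1)) / (j + 1)
  have hc : HasSum c (log (1 - y) - log (1 - x)) :=
    hasSum_pow_succ_sub_pow_succ_div (abs_lt.2 ⟨by linarith, by linarith⟩)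
      (abs_lt.2 ⟨by linarith, by linarith⟩)
  have hc0 : ∀ j, 0 ≤ c j := fun j =>
    div_nonneg (sub_nonneg.2 (pow_le_pow_left₀ hy hyx _)) (by positivity)
  have hcg : ∀ j, c j * g j ^ p ≤ g j ^ p / (j + 1) := fun j => by
    have hw : x ^ (j + 1) - y ^ (j + 1) ≤ 1 := by
      linarith [pow_le_one₀ (hy.trans hyx) hx.le (n := j + 1), pow_nonneg hy (j + 1)]
    rw [div_mul_eq_mul_div]
    exact div_le_div_of_nonneg_right (mul_le_of_le_one_left (rpow_nonneg (hg j) _) hw)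
      (by positivity)
  have hcg_sum : Summable fun j => c j * g j ^ p :=
    hg_sum.of_nonneg_of_le (fun j => mul_nonneg (hc0 j) (rpow_nonneg (hg j) _)) hcg
  obtain ⟨hsum, hle⟩ :=
    summable_and_inner_le_weight_mul_Lp_tsum_of_nonneg hpq hc0 hg hc.summable hcg_sum
  refine ⟨hsum, hle.trans ?_⟩
  rw [hc.tsum_eq]
  exact mul_le_mul_of_nonneg_right
    (rpow_le_rpow (tsum_nonneg fun j => mul_nonneg (hc0 j) (rpow_nonneg (hg j) _))
      (hcg_sum.tsum_le_tsum hcg hg_sum) hpq.one_div_nonneg)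
    (rpow_nonneg (hc.nonneg hc0) _)

/-- `logSeries a x = ∑_{j ≥ 1} a_{j-1} x^j / j`; the paper's `L` is
`logSeries (fun j => d (j + 1) * (f̂ (j + 1) - 1))`. -/
noncomputable def logSeries (a : ℕ → ℂ) (x : ℝ) : ℂ :=
  ∑' j : ℕ, a j * (x : ℂ) ^ (j + 1) / ((j : ℂ) + 1)

namespace logSeries

variable {a : ℕ → ℂ} {g : ℕ → ℝ} {K p q : ℝ} {x y : ℝ}

theorem norm_term_sub_term_le {j : ℕ} (ha : ‖a j‖ ≤ K * g j) (hy : 0 ≤ y) (hyx : y ≤ x) :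
    ‖a j * (x : ℂ) ^ (j + 1) / ((j : ℂ) + 1) - a j * (y : ℂ) ^ (j + 1) / ((j : ℂ) + 1)‖ ≤
      K * ((x ^ (j + 1) - y ^ (j + 1)) / (j + 1) * g j) := by
  have hw : 0 ≤ (x ^ (j + 1) - y ^ (j + 1)) / (j + 1) :=
    div_nonneg (sub_nonneg.2 (pow_le_pow_left₀ hy hyx _)) (by positivity)
  have hnorm : a j * (x : ℂ) ^ (j + 1) / ((j : ℂ) + 1) - a j * (y : ℂ) ^ (j + 1) / ((j : ℂ) + 1) =
      a j * (((x ^ (j + 1) - y ^ (j + 1)) / (j + 1) : ℝ) : ℂ) := by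
    push_cast
    ring
  rw [hnorm, norm_mul, Complex.norm_real, Real.norm_of_nonneg hw]
  calc ‖a j‖ * ((x ^ (j + 1) - y ^ (j + 1)) / (j + 1)) ≤
        K * g j * ((x ^ (j + 1) - y ^ (j + 1)) / (j + 1)) := by gcongr
    _ = K * ((x ^ (j + 1) - y ^ (j + 1)) / (j + 1) * g j) := by ring

theorem summable_norm_term_sub_term (hpq : p.HolderConjugate q) (hg : ∀ j, 0 ≤ g j)
    (hg_sum : Summable fun j : ℕ => g j ^ p / (j + 1)) (ha : ∀ j, ‖a j‖ ≤ K * g j)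
    (hy : 0 ≤ y) (hyx : y ≤ x) (hx : x < 1) :
    Summable fun j : ℕ =>
      ‖a j * (x : ℂ) ^ (j + 1) / ((j : ℂ) + 1) - a j * (y : ℂ) ^ (j + 1) / ((j : ℂ) + 1)‖ :=
  ((summable_and_tsum_mul_pow_succ_sub_pow_succ_div_le hpq hg hg_sum hy hyx hx).1.mul_left K
    ).of_nonneg_of_le (fun _ => norm_nonneg _) fun _ => norm_term_sub_term_le (ha _) hy hyx

theorem summable_term (hpq : p.HolderConjugate q) (hg : ∀ j, 0 ≤ g j)
    (hg_sum : Summable fun j : ℕ => g j ^ p / (j + 1)) (ha : ∀ j, ‖a j‖ ≤ K * g j)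
    (hx0 : 0 ≤ x) (hx : x < 1) :
    Summable fun j : ℕ => a j * (x : ℂ) ^ (j + 1) / ((j : ℂ) + 1) :=
  Summable.of_norm <| by
    simpa using summable_norm_term_sub_term hpq hg hg_sum ha le_rfl hx0 hx

theorem norm_sub_le (hK : 0 ≤ K) (hpq : p.HolderConjugate q) (hg : ∀ j, 0 ≤ g j)
    (hg_sum : Summable fun j : ℕ => g j ^ p / (j + 1)) (ha : ∀ j, ‖a j‖ ≤ K * g j)
    (hy : 0 ≤ y) (hyx : y ≤ x) (hx : x < 1) :
    ‖logSeries a x - logSeries a y‖ ≤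
      K * (∑' j : ℕ, g j ^ p / (j + 1)) ^ (1 / p) * (log (1 - y) - log (1 - x)) ^ (1 / q) := by
  obtain ⟨hsum, hle⟩ := summable_and_tsum_mul_pow_succ_sub_pow_succ_div_le hpq hg hg_sum hy hyx hx
  have hnorm_sum := summable_norm_term_sub_term hpq hg hg_sum ha hy hyx hx
  rw [logSeries, logSeries, ← (summable_term hpq hg hg_sum ha (hy.trans hyx) hx).tsum_sub
    (summable_term hpq hg hg_sum ha hy (hyx.trans_lt hx))]
  calc _ ≤ _ := norm_tsum_le_tsum_norm hnorm_sum
    _ ≤ ∑' j : ℕ, K * ((x ^ (j + 1) - y ^ (j + 1)) / (j + 1) * g j) :=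
        hnorm_sum.tsum_le_tsum (fun _ => norm_term_sub_term_le (ha _) hy hyx) (hsum.mul_left K)
    _ = K * ∑' j : ℕ, (x ^ (j + 1) - y ^ (j + 1)) / (j + 1) * g j := tsum_mul_left
    _ ≤ _ := by rw [mul_assoc]; gcongr

theorem norm_sub_le_of_log_sub_le (hK : 0 ≤ K) (hpq : p.HolderConjugate q) (hg : ∀ j, 0 ≤ g j)
    (hg_sum : Summable fun j : ℕ => g j ^ p / (j + 1)) (ha : ∀ j, ‖a j‖ ≤ K * g j)
    {T : ℝ} (hy : 0 ≤ y) (hyx : y ≤ x) (hx : x < 1) (hT : 1 ≤ T)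
    (hlog : log (1 - y) - log (1 - x) ≤ T) :
    ‖logSeries a x - logSeries a y‖ ≤ K * (∑' j : ℕ, g j ^ p / (j + 1)) ^ (1 / p) * T := by
  refine (norm_sub_le hK hpq hg hg_sum ha hy hyx hx).trans ?_
  have hlog0 : 0 ≤ log (1 - y) - log (1 - x) :=
    sub_nonneg.2 (log_le_log (by linarith) (by linarith))
  have hρ : 0 ≤ K * (∑' j : ℕ, g j ^ p / (j + 1)) ^ (1 / p) :=
    mul_nonneg hK (rpow_nonneg (tsum_nonneg fun j => div_nonneg (rpow_nonneg (hg j) _)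
      (by positivity)) _)
  refine mul_le_mul_of_nonneg_left ?_ hρ
  calc (log (1 - y) - log (1 - x)) ^ (1 / q) ≤ T ^ (1 / q) :=
        rpow_le_rpow hlog0 hlog hpq.symm.one_div_nonneg
    _ ≤ T := rpow_le_self_of_one_le hT ((div_le_one hpq.symm.pos).2 hpq.symm.lt.le)

theorem norm_exp_sub_exp_le (hK : 0 ≤ K) (hpq : p.HolderConjugate q) (hg : ∀ j, 0 ≤ g j)
    (hg_sum : Summable fun j : ℕ => g j ^ p / (j + 1)) (ha : ∀ j, ‖a j‖ ≤ K * g j)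
    {n m : ℝ} (hn : 1 ≤ n) (hm : 1 ≤ m) :
    ‖logSeries a (exp (-1 / n)) - logSeries a (exp (-1 / m))‖ ≤
      K * (∑' j : ℕ, g j ^ p / (j + 1)) ^ (1 / p) * (1 + |log (n / m)|) := by
  wlog hmn : m ≤ n generalizing n m
  · rw [norm_sub_rev, ← abs_neg, ← log_inv, inv_div]
    exact this hm hn (le_of_not_ge hmn)
  have hn0 : 0 < n := one_pos.trans_le hn
  have hm0 : 0 < m := one_pos.trans_le hm
  rw [show -1 / n = -n⁻¹ by ring, show -1 / m = -m⁻¹ by ring]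
  refine norm_sub_le_of_log_sub_le hK hpq hg hg_sum ha (exp_nonneg _)
    (exp_le_exp.2 (neg_le_neg (inv_anti₀ hm0 hmn)))
    (exp_lt_one_iff.2 (neg_lt_zero.2 (inv_pos.2 hn0)))
    (le_add_of_nonneg_right (abs_nonneg _)) ?_
  have hupper := log_one_sub_exp_neg_le_log (inv_pos.2 hm0)
  have hlower := log_sub_one_le_log_one_sub_exp_neg (inv_pos.2 hn0) (inv_le_one_of_one_le₀ hn)
  rw [log_inv] at hupper hlower
  rw [log_div hn0.ne' hm0.ne']
  linarith [le_abs_self (log n - log m)]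

theorem norm_exp_le (hK : 0 ≤ K) (hpq : p.HolderConjugate q) (hg : ∀ j, 0 ≤ g j)
    (hg_sum : Summable fun j : ℕ => g j ^ p / (j + 1)) (ha : ∀ j, ‖a j‖ ≤ K * g j)
    {n : ℝ} (hn : 1 ≤ n) :
    ‖logSeries a (exp (-1 / n))‖ ≤
      K * (∑' j : ℕ, g j ^ p / (j + 1)) ^ (1 / p) * (1 + log n) := by
  have hn0 : 0 < n := one_pos.trans_le hn
  have hzero : logSeries a 0 = 0 := by simp [logSeries]
  have hlog : log (1 - 0) - log (1 - exp (-n⁻¹)) ≤ 1 + log n := by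
    have hlower := log_sub_one_le_log_one_sub_exp_neg (inv_pos.2 hn0) (inv_le_one_of_one_le₀ hn)
    rw [log_inv] at hlower
    rw [sub_zero, log_one]
    linarith
  rw [show -1 / n = -n⁻¹ by ring]
  simpa [hzero] using norm_sub_le_of_log_sub_le hK hpq hg hg_sum ha le_rfl (exp_nonneg _)
    (exp_lt_one_iff.2 (neg_lt_zero.2 (inv_pos.2 hn0))) (le_add_of_nonneg_right (log_nonneg hn)) hlog

end logSeries

theorem stmt_16_general (d : ℕ → ℝ) (dp : ℝ)
    (hd : ∀ j : ℕ, 1 ≤ j → 0 < d j ∧ d j ≤ dp)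
    (fhat : ℕ → ℂ)
    (P : ℝ) (hP : 1 < P)
    (hsum : Summable (fun j : ℕ => ‖fhat (j + 1) - 1‖ ^ P / ((j : ℝ) + 1))) :
    ∀ n m : ℕ, 1 ≤ n → 1 ≤ m →
      ‖(∑' j : ℕ, (d (j + 1) : ℂ) * (fhat (j + 1) - 1) *
            ((Real.exp (-1 / (n : ℝ)) : ℝ) : ℂ) ^ (j + 1) / ((j : ℂ) + 1))
        - (∑' j : ℕ, (d (j + 1) : ℂ) * (fhat (j + 1) - 1) *
            ((Real.exp (-1 / (m : ℝ)) : ℝ) : ℂ) ^ (j + 1) / ((j : ℂ) + 1))‖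
        ≤ dp * (∑' j : ℕ, ‖fhat (j + 1) - 1‖ ^ P / ((j : ℝ) + 1)) ^ (1 / P) *
            (1 + |Real.log ((n : ℝ) / (m : ℝ))|) ∧
      ‖∑' j : ℕ, (d (j + 1) : ℂ) * (fhat (j + 1) - 1) *
            ((Real.exp (-1 / (n : ℝ)) : ℝ) : ℂ) ^ (j + 1) / ((j : ℂ) + 1)‖
        ≤ dp * (∑' j : ℕ, ‖fhat (j + 1) - 1‖ ^ P / ((j : ℝ) + 1)) ^ (1 / P) *
            (1 + Real.log (n : ℝ)) := by
  intro n m hn hm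
  have hdp : 0 ≤ dp := (hd 1 le_rfl).1.le.trans (hd 1 le_rfl).2
  have ha : ∀ j : ℕ, ‖(d (j + 1) : ℂ) * (fhat (j + 1) - 1)‖ ≤ dp * ‖fhat (j + 1) - 1‖ := by
    intro j
    obtain ⟨hd_pos, hd_le⟩ := hd (j + 1) j.succ_pos
    rw [norm_mul, Complex.norm_real, Real.norm_of_nonneg hd_pos.le]
    exact mul_le_mul_of_nonneg_right hd_le (norm_nonneg _)
  have hpq := Real.HolderConjugate.conjExponent hP
  have hg : ∀ j : ℕ, 0 ≤ ‖fhat (j + 1) - 1‖ := fun _ => norm_nonneg _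
  have hn' : (1 : ℝ) ≤ n := Nat.one_le_cast.2 hn
  exact ⟨logSeries.norm_exp_sub_exp_le hdp hpq hg hsum ha hn' (Nat.one_le_cast.2 hm),
    logSeries.norm_exp_le hdp hpq hg hsum ha hn'⟩

/-- Lipschitz-type bounds for `L(x) = ∑_j d_j (f̂(j)−1) x^j / j`:
`|L(e^{-1/n}) − L(e^{-1/m})| ≤ d⁺ ρ(p)(1 + |log(n/m)|)` and
`|L(e^{-1/n})| ≤ d⁺ ρ(p)(1 + log n)`, where `ρ(p) = (∑_j |f̂(j)−1|^p / j)^{1/p}`. -/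
theorem stmt_16 (d : ℕ → ℝ) (dp : ℝ)
    (hd : ∀ j : ℕ, 1 ≤ j → 0 < d j ∧ d j ≤ dp)
    (fhat : ℕ → ℂ) (hf : ∀ j, ‖fhat j‖ ≤ 1)
    (P : ℝ) (hP : 1 < P)
    (hsum : Summable (fun j : ℕ => ‖fhat (j + 1) - 1‖ ^ P / ((j : ℝ) + 1))) :
    ∀ n m : ℕ, 1 ≤ n → 1 ≤ m →
      ‖(∑' j : ℕ, (d (j + 1) : ℂ) * (fhat (j + 1) - 1) *
            ((Real.exp (-1 / (n : ℝ)) : ℝ) : ℂ) ^ (j + 1) / ((j : ℂ) + 1))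
        - (∑' j : ℕ, (d (j + 1) : ℂ) * (fhat (j + 1) - 1) *
            ((Real.exp (-1 / (m : ℝ)) : ℝ) : ℂ) ^ (j + 1) / ((j : ℂ) + 1))‖
        ≤ dp * (∑' j : ℕ, ‖fhat (j + 1) - 1‖ ^ P / ((j : ℝ) + 1)) ^ (1 / P) *
            (1 + |Real.log ((n : ℝ) / (m : ℝ))|) ∧
      ‖∑' j : ℕ, (d (j + 1) : ℂ) * (fhat (j + 1) - 1) *
            ((Real.exp (-1 / (n : ℝ)) : ℝ) : ℂ) ^ (j + 1) / ((j : ℂ) + 1)‖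
        ≤ dp * (∑' j : ℕ, ‖fhat (j + 1) - 1‖ ^ P / ((j : ℝ) + 1)) ^ (1 / P) *
            (1 + Real.log (n : ℝ)) :=
  stmt_16_general d dp hd fhat P hP hsum
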